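/- arXiv:2510.06789 — 2 statements merged into one kernel-verified Lean document; each statement's English description precedes it below -/
import Mathlib

section
/- The expected score function E L(π) = Σ_{i<j} c_{ij} (2p_{ij} − 1) · 1{π_i > π_j}, where all c_{ij} > 0, is uniquely maximized over permutations π at the true ranking π*, where π* is the permutation satisfying π*_i > π*_j iff p_{ij} > 1/2. -/
/-!
The score is a sum over pairs `i < j` of the weight `c i j * (2 * p i j - 1)`, counted exactly
when `π` inverts the pair. The true ranking inverts precisely the pairs of positive weight, so
it maximizes every summand separately. A permutation `π ≠ π*` disagrees with `π*` on the
inversion of some pair, and since `p i j ≠ 1/2` the weight of that pair is nonzero, so `π`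
loses strictly there.
-/

/-- Expected score of a ranking π: Σ_{i<j} c i j * (2 p i j - 1) * 1{π i > π j}. -/
noncomputable def expectedScore {n : ℕ} (p c : Fin n → Fin n → ℝ)
    (π : Equiv.Perm (Fin n)) : ℝ :=
  ∑ i : Fin n, ∑ j : Fin n, if i < j ∧ π j < π i then c i j * (2 * p i j - 1) else 0

theorem Equiv.eq_of_lt_imp_lt {α β : Type*} [LinearOrder β] [WellFoundedLT β] {σ τ : α ≃ β}
    (h : ∀ i j, σ i < σ j → τ i < τ j) : σ = τ := by
  have hmono : StrictMono (σ.symm.trans τ) := fun x y hxy => by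
    simpa using h (σ.symm x) (σ.symm y) (by simpa using hxy)
  have hid := Subsingleton.elim (hmono.orderIsoOfSurjective _ (Equiv.surjective _)) (.refl β)
  ext i
  simpa using congr($hid (σ i)).symm

theorem Equiv.exists_lt_and_not_iff_of_ne {α β : Type*} [LinearOrder α] [LinearOrder β]
    [WellFoundedLT β] {σ τ : α ≃ β} (h : σ ≠ τ) :
    ∃ a b, a < b ∧ ¬(σ b < σ a ↔ τ b < τ a) := by
  contrapose! h
  refine Equiv.eq_of_lt_imp_lt fun i j hσ => ?_
  rcases lt_trichotomy i j with hij | rfl | hji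
  · have hτ : ¬τ j < τ i := (h i j hij).not.mp hσ.not_gt
    exact (not_lt.mp hτ).lt_of_ne (τ.injective.ne hij.ne)
  · exact absurd hσ (lt_irrefl _)
  · exact (h j i hji).mp hσ

theorem ite_le_ite_of_iff_pos {α : Type*} [Zero α] [LinearOrder α] {P Q : Prop} [Decidable P]
    [Decidable Q] {w : α} (hQ : Q ↔ 0 < w) : (if P then w else 0) ≤ if Q then w else 0 := by
  split_ifs <;> grind

theorem ite_lt_ite_of_iff_pos {α : Type*} [Zero α] [LinearOrder α] {P Q : Prop} [Decidable P]
    [Decidable Q] {w : α} (hQ : Q ↔ 0 < w) (hw : w ≠ 0) (hPQ : ¬(P ↔ Q)) :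
    (if P then w else 0) < if Q then w else 0 := by
  split_ifs <;> grind

section

variable {n : ℕ} {p c : Fin n → Fin n → ℝ} {πstar : Equiv.Perm (Fin n)}

theorem inversion_iff_weight_pos (hc : ∀ i j : Fin n, i < j → 0 < c i j)
    (hstar : ∀ i j : Fin n, i ≠ j → (πstar j < πstar i ↔ 1/2 < p i j)) {i j : Fin n}
    (hij : i < j) : πstar j < πstar i ↔ 0 < c i j * (2 * p i j - 1) := by
  rw [hstar i j hij.ne, mul_pos_iff_of_pos_left (hc i j hij)]
  constructor <;> intro <;> linarith

theorem expectedScore_term_le (hc : ∀ i j : Fin n, i < j → 0 < c i j)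
    (hstar : ∀ i j : Fin n, i ≠ j → (πstar j < πstar i ↔ 1/2 < p i j))
    (π : Equiv.Perm (Fin n)) (i j : Fin n) :
    (if i < j ∧ π j < π i then c i j * (2 * p i j - 1) else 0) ≤
      if i < j ∧ πstar j < πstar i then c i j * (2 * p i j - 1) else 0 := by
  by_cases hij : i < j
  · simp only [hij, true_and]
    exact ite_le_ite_of_iff_pos (inversion_iff_weight_pos hc hstar hij)
  · simp only [hij, false_and, if_false, le_refl]

end

theorem expectedScore_uniquely_maximized_general (n : ℕ)
    (p c : Fin n → Fin n → ℝ)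
    (hne : ∀ i j : Fin n, i ≠ j → p i j ≠ 1/2)
    (hc : ∀ i j : Fin n, i < j → 0 < c i j)
    (πstar : Equiv.Perm (Fin n))
    (hstar : ∀ i j : Fin n, i ≠ j → (πstar j < πstar i ↔ 1/2 < p i j)) :
    ∀ π : Equiv.Perm (Fin n), π ≠ πstar →
      expectedScore p c π < expectedScore p c πstar := by
  intro π hπ
  obtain ⟨a, b, hab, hdiff⟩ := Equiv.exists_lt_and_not_iff_of_ne hπ
  have hw : c a b * (2 * p a b - 1) ≠ 0 :=
    mul_ne_zero (hc a b hab).ne' fun h => hne a b hab.ne (by linarith)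
  have hlt : (if a < b ∧ π b < π a then c a b * (2 * p a b - 1) else 0) <
      if a < b ∧ πstar b < πstar a then c a b * (2 * p a b - 1) else 0 := by
    simp only [hab, true_and]
    exact ite_lt_ite_of_iff_pos (inversion_iff_weight_pos hc hstar hab) hw hdiff
  have hle := expectedScore_term_le hc hstar π
  exact Finset.sum_lt_sum (fun i _ => Finset.sum_le_sum fun j _ => hle i j)
    ⟨a, Finset.mem_univ a, Finset.sum_lt_sum (fun j _ => hle a j) ⟨b, Finset.mem_univ b, hlt⟩⟩

/-- The expected score is uniquely maximized at the true ranking π*. -/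
theorem expectedScore_uniquely_maximized (n : ℕ) (hn : 0 < n)
    (p c : Fin n → Fin n → ℝ)
    (hsum : ∀ i j : Fin n, i ≠ j → p i j + p j i = 1)
    (hne : ∀ i j : Fin n, i ≠ j → p i j ≠ 1/2)
    (hWST : ∀ i j k : Fin n, i ≠ j → j ≠ k → i ≠ k →
      1/2 < p i j → 1/2 < p j k → 1/2 < p i k)
    (hc : ∀ i j : Fin n, i < j → 0 < c i j)
    (πstar : Equiv.Perm (Fin n))
    (hstar : ∀ i j : Fin n, i ≠ j → (πstar j < πstar i ↔ 1/2 < p i j)) :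
    ∀ π : Equiv.Perm (Fin n), π ≠ πstar →
      expectedScore p c π < expectedScore p c πstar :=
  expectedScore_uniquely_maximized_general n p c hne hc πstar hstar
end

section
/- For 1 ≤ r ≤ n(n−1)/2, the number of permutations π of {1,...,n} with at most r inversions is at most the binomial coefficient C(n + r − 1, n − 1). -/
/-!
The Lehmer code of `π` records, for each position `i`, the number `c i` of later positions `j`
with `π j < π i`. It determines `π`, its entries sum to the number of inversions, and its last
entry is `0`. Putting the slack `r - inversions π` into that last entry therefore embeds the
permutations with at most `r` inversions into the weak compositions of `r` into `n` parts, of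
which there are `C(n + r - 1, n - 1)`.
-/

def inversions {n : ℕ} (π : Equiv.Perm (Fin n)) : ℕ :=
  (Finset.univ.filter (fun q : Fin n × Fin n => q.1 < q.2 ∧ π q.2 < π q.1)).card

open Finset

lemma Finset.strictMonoOn_card_filter_lt {α : Type*} [LinearOrder α] (s : Finset α) :
    StrictMonoOn (fun v => #{x ∈ s | x < v}) s := by
  intro u hu v _ huv
  refine card_lt_card ⟨fun x hx => ?_, fun hsub => ?_⟩
  · simp only [mem_filter] at hx ⊢
    exact ⟨hx.1, hx.2.trans huv⟩
  simpa using hsub (mem_filter.2 ⟨hu, huv⟩)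

namespace Equiv.Perm

variable {α : Type*} [Fintype α] [LinearOrder α]

def lehmerCode (π : Perm α) (i : α) : ℕ :=
  #{j | i < j ∧ π j < π i}

lemma lehmerCode_eq_card_filter_lt (π : Perm α) (i : α) :
    lehmerCode π i = #{u ∈ ({j | i ≤ j} : Finset α).map π.toEmbedding | u < π i} := by
  rw [lehmerCode, filter_map, card_map, filter_filter]
  congr 1
  ext j
  simp only [mem_filter, mem_univ, true_and, Function.comp_apply, toEmbedding_apply]
  constructor
  · exact fun h => ⟨h.1.le, h.2⟩
  · rintro ⟨hij, hlt⟩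
    exact ⟨hij.lt_of_ne (by rintro rfl; exact hlt.false), hlt⟩

lemma lehmerCode_of_isMax (π : Perm α) {i : α} (hi : IsMax i) : lehmerCode π i = 0 := by
  simp [lehmerCode, hi.not_lt]

/-- At the first position `i` where `π` and `τ` differ, both place the same set of values on
`{j | i ≤ j}`, and the code at `i` is the rank of `π i` in that set. -/
lemma lehmerCode_injective : Function.Injective (lehmerCode (α := α)) := by
  intro π τ h
  ext i
  induction i using WellFoundedLT.induction with
  | _ i ih =>
  have hagree : ∀ u, π.symm u < i ∨ τ.symm u < i → π.symm u = τ.symm u := by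
    rintro u (hu | hu)
    · rw [eq_symm_apply, ← ih _ hu, apply_symm_apply]
    · rw [symm_apply_eq, ih _ hu, apply_symm_apply]
  have hU : ({j | i ≤ j} : Finset α).map π.toEmbedding =
      ({j | i ≤ j} : Finset α).map τ.toEmbedding := by
    ext u
    simp only [mem_map_equiv, mem_filter, mem_univ, true_and]
    by_cases hlt : π.symm u < i ∨ τ.symm u < i
    · rw [hagree u hlt]
    · push Not at hlt
      exact iff_of_true hlt.1 hlt.2
  have hπi : π i ∈ ({j | i ≤ j} : Finset α).map τ.toEmbedding := hU ▸ by simp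
  have hcode := congrFun h i
  rw [lehmerCode_eq_card_filter_lt, lehmerCode_eq_card_filter_lt, hU] at hcode
  exact (strictMonoOn_card_filter_lt _).injOn hπi (by simp) hcode

end Equiv.Perm

open Equiv.Perm

lemma sum_lehmerCode {n : ℕ} (π : Equiv.Perm (Fin n)) : ∑ i, lehmerCode π i = inversions π := by
  simp only [inversions, lehmerCode, card_filter]
  rw [← univ_product_univ, sum_product]

lemma card_filter_inversions_le (m r : ℕ) :
    #{π : Equiv.Perm (Fin (m + 1)) | inversions π ≤ r} ≤ (m + r).choose m := by
  classical
  let slack (π : Equiv.Perm (Fin (m + 1))) : Fin (m + 1) → ℕ :=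
    lehmerCode π + Pi.single (Fin.last m) (r - inversions π)
  have hslack_sum : ∀ π, inversions π ≤ r → ∑ i, slack π i = r := by
    intro π hπ
    simp [slack, sum_add_distrib, sum_lehmerCode, hπ]
  have hslack_inj : Set.InjOn slack {π | inversions π ≤ r} := by
    intro π _ τ _ h
    refine lehmerCode_injective (funext fun i => ?_)
    rcases eq_or_ne i (Fin.last m) with rfl | hi
    · have hmax : IsMax (Fin.last m) := fun j _ => Fin.le_last j
      rw [lehmerCode_of_isMax _ hmax, lehmerCode_of_isMax _ hmax]
    · simpa [slack, hi] using congrFun h i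
  calc #{π : Equiv.Perm (Fin (m + 1)) | inversions π ≤ r}
      ≤ #((univ : Finset (Fin (m + 1))).finsuppAntidiag r) := by
        refine card_le_card_of_injOn (fun π => Finsupp.equivFunOnFinite.symm (slack π)) ?_ ?_
        · intro π hπ
          simpa using hslack_sum π (by simpa using hπ)
        · exact (Finsupp.equivFunOnFinite.symm.injective.comp_injOn hslack_inj).mono (by simp)
    _ = (m + r).choose m := by
        rw [card_finsuppAntidiag_nat_eq_choose, card_univ, Fintype.card_fin,
          Nat.add_right_comm, Nat.add_sub_cancel, Nat.choose_symm_add]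

theorem card_kendall_ball_le_general (n r : ℕ) :
    (Finset.univ.filter (fun π : Equiv.Perm (Fin n) => inversions π ≤ r)).card
      ≤ Nat.choose (n + r - 1) (n - 1) := by
  cases n with
  | zero => exact (card_filter_le _ _).trans (by simp)
  | succ m => simpa [Nat.add_right_comm] using card_filter_inversions_le m r

/-- The number of permutations with at most r inversions is at most C(n+r−1, n−1). -/
theorem card_kendall_ball_le (n r : ℕ) (hr1 : 1 ≤ r) (hr2 : r ≤ n * (n - 1) / 2) :
    (Finset.univ.filter (fun π : Equiv.Perm (Fin n) => inversions π ≤ r)).card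
      ≤ Nat.choose (n + r - 1) (n - 1) :=
  card_kendall_ball_le_general n r
end
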